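/- arXiv:1803.02413 — 3 statements merged into one kernel-verified Lean document; each statement's English description precedes it below -/
import Mathlib

section
/- If $k \in L^{p,\infty}(\mathbb{R}^n)$ with $1 < p < \infty$ and $f \in L^1(\mathbb{R}^n)$, then the convolution $k * f$ satisfies $\|k * f\|_{L^{p,\infty}} \leq C \|k\|_{L^{p,\infty}} \|f\|_{L^1}$ for some constant $C$ depending only on $p$. -/
/-!
Split `‖k‖ ≤ M + G`, where `G` is a measurable majorant of the part of `‖k‖` above level `M`,
built from measurable hulls of the dyadic level sets `{‖k‖ > M 2ʲ}` (`k` itself need not be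
measurable). Convolving the bounded part with `f` gives at most `M ‖f‖₁` pointwise, while the
weak-type bound on `k` sums to `∫ G ≲ ‖k‖^p M^{1-p}`, so Tonelli and Chebyshev control the set
where the tail part exceeds `M ‖f‖₁`. Taking `M = α / (2 ‖f‖₁)` yields
`α^p μ{‖k * f‖ > α} ≲ ‖k‖^p ‖f‖₁^p`.
-/

open MeasureTheory
open scoped NNReal ENNReal

/-- The weak `L^p` quasinorm `sup_{α>0} α · μ{x : ‖g x‖ > α}^{1/p}`. -/
noncomputable def wnorm {X E : Type*} [MeasurableSpace X] [Norm E]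
    (μ : Measure X) (p : ℝ) (g : X → E) : ℝ≥0∞ :=
  ⨆ α : ℝ≥0, (α : ℝ≥0∞) * μ {x | (α : ℝ) < ‖g x‖} ^ (1 / p)

open Set

theorem wnorm_le_iff {X E : Type*} [MeasurableSpace X] [SeminormedAddGroup E] {μ : Measure X}
    {p : ℝ} (hp : 0 < p) {g : X → E} {B : ℝ≥0∞} :
    wnorm μ p g ≤ B ↔ ∀ t : ℝ≥0, (t : ℝ≥0∞) ^ p * μ {x | (t : ℝ≥0∞) < ‖g x‖ₑ} ≤ B ^ p := by
  have hset : ∀ t : ℝ≥0, {x | (t : ℝ) < ‖g x‖} = {x | (t : ℝ≥0∞) < ‖g x‖ₑ} := fun t => by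
    ext x; simp [enorm_eq_nnnorm, ← NNReal.coe_lt_coe]
  simp only [wnorm, iSup_le_iff, hset]
  refine forall_congr' fun t => ?_
  rw [← ENNReal.rpow_le_rpow_iff hp, ENNReal.mul_rpow_of_nonneg _ _ hp.le, ← ENNReal.rpow_mul,
    one_div_mul_cancel hp.ne', ENNReal.rpow_one]

noncomputable def dyadicTailConst (p : ℝ) : ℝ≥0∞ := 2 * (1 - 2 ^ (1 - p))⁻¹

theorem dyadicTailConst_ne_top {p : ℝ} (hp : 1 < p) : dyadicTailConst p ≠ ⊤ := by
  refine ENNReal.mul_ne_top ENNReal.ofNat_ne_top (ENNReal.inv_ne_top.2 ?_)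
  exact (tsub_pos_of_lt (ENNReal.rpow_lt_one_of_one_lt_of_neg ENNReal.one_lt_two
    (by linarith))).ne'

section DyadicMajorant

variable {X : Type*} [MeasurableSpace X] (μ : Measure X)

theorem exists_measurable_le_add_lintegral_eq_tsum (K : X → ℝ≥0∞) {M : ℝ≥0} (hM : M ≠ 0) :
    ∃ G : X → ℝ≥0∞, Measurable G ∧ (∀ x, K x ≤ M + G x) ∧
      ∫⁻ x, G x ∂μ = ∑' j : ℕ, ((M * 2 ^ (j + 1) : ℝ≥0) : ℝ≥0∞) *
        μ {x | ((M * 2 ^ j : ℝ≥0) : ℝ≥0∞) < K x} := by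
  set F : ℕ → Set X := fun j => toMeasurable μ {x | ((M * 2 ^ j : ℝ≥0) : ℝ≥0∞) < K x}
  have hF : ∀ j, MeasurableSet (F j) := fun j => measurableSet_toMeasurable _ _
  refine ⟨fun x => ∑' j, (F j).indicator (fun _ => ((M * 2 ^ (j + 1) : ℝ≥0) : ℝ≥0∞)) x,
    Measurable.tsum fun j => measurable_const.indicator (hF j), fun x => ?_, ?_⟩
  · have hterm : ∀ j, ((M * 2 ^ j : ℝ≥0) : ℝ≥0∞) < K x →
        (F j).indicator (fun _ => ((M * 2 ^ (j + 1) : ℝ≥0) : ℝ≥0∞)) x = (M * 2 ^ (j + 1) : ℝ≥0) :=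
      fun j hj => indicator_of_mem (subset_toMeasurable μ _ hj) _
    by_cases hall : ∀ j, ((M * 2 ^ j : ℝ≥0) : ℝ≥0∞) < K x
    · have htop : ∑' j, (F j).indicator (fun _ => ((M * 2 ^ (j + 1) : ℝ≥0) : ℝ≥0∞)) x = ⊤ := by
        refine eq_top_mono (ENNReal.tsum_le_tsum fun j => ?_)
          (ENNReal.tsum_const_eq_top_of_ne_zero (ENNReal.coe_ne_zero.2 hM))
        rw [hterm j (hall j), ENNReal.coe_le_coe]
        exact le_mul_of_one_le_right' (one_le_pow₀ one_le_two)
      simp only [htop, add_top, le_top]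
    · obtain ⟨n, hn⟩ := not_forall.1 hall
      replace hn := not_lt.1 hn
      induction n with
      | zero => simpa using le_add_right hn
      | succ n ih =>
        by_cases hlt : ((M * 2 ^ n : ℝ≥0) : ℝ≥0∞) < K x
        · exact le_add_left (hn.trans ((hterm n hlt).symm.le.trans (ENNReal.le_tsum n)))
        · exact ih (not_lt.1 hlt)
  · rw [lintegral_tsum fun j => (measurable_const.indicator (hF j)).aemeasurable]
    congr 1 with j
    rw [lintegral_indicator_const (hF j), measure_toMeasurable]

theorem rpow_mul_tsum_dyadic_le {p : ℝ} (hp : 0 ≤ p) {K : X → ℝ≥0∞} {D : ℝ≥0∞}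
    (hK : ∀ t : ℝ≥0, (t : ℝ≥0∞) ^ p * μ {x | (t : ℝ≥0∞) < K x} ≤ D) (M : ℝ≥0) :
    (M : ℝ≥0∞) ^ p * ∑' j : ℕ, ((M * 2 ^ (j + 1) : ℝ≥0) : ℝ≥0∞) *
        μ {x | ((M * 2 ^ j : ℝ≥0) : ℝ≥0∞) < K x} ≤
      dyadicTailConst p * D * M := by
  have h2 : (2 : ℝ≥0∞) ^ (1 - p) * 2 ^ p = 2 := by
    rw [← ENNReal.rpow_add _ _ two_ne_zero ENNReal.ofNat_ne_top]; norm_num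
  have hterm : ∀ j : ℕ, (M : ℝ≥0∞) ^ p * ((M * 2 ^ (j + 1) : ℝ≥0) : ℝ≥0∞) =
      2 * M * ((2 : ℝ≥0∞) ^ (1 - p)) ^ j * ((M * 2 ^ j : ℝ≥0) : ℝ≥0∞) ^ p := fun j => by
    push_cast
    rw [ENNReal.mul_rpow_of_nonneg _ _ hp, ← ENNReal.rpow_natCast_mul, mul_comm (j : ℝ) p,
      ENNReal.rpow_mul_natCast]
    calc _ = 2 * M * ((2 : ℝ≥0∞) ^ (1 - p) * 2 ^ p) ^ j * M ^ p := by rw [h2]; ring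
      _ = _ := by ring
  calc (M : ℝ≥0∞) ^ p * ∑' j : ℕ, ((M * 2 ^ (j + 1) : ℝ≥0) : ℝ≥0∞) *
        μ {x | ((M * 2 ^ j : ℝ≥0) : ℝ≥0∞) < K x}
      = ∑' j : ℕ, 2 * M * ((2 : ℝ≥0∞) ^ (1 - p)) ^ j *
          (((M * 2 ^ j : ℝ≥0) : ℝ≥0∞) ^ p * μ {x | ((M * 2 ^ j : ℝ≥0) : ℝ≥0∞) < K x}) := by
        rw [← ENNReal.tsum_mul_left]
        congr 1 with j
        rw [← mul_assoc, hterm, mul_assoc]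
    _ ≤ ∑' j : ℕ, 2 * M * ((2 : ℝ≥0∞) ^ (1 - p)) ^ j * D :=
        ENNReal.tsum_le_tsum fun j => by gcongr; exact hK _
    _ = dyadicTailConst p * D * M := by
        rw [ENNReal.tsum_mul_right, ENNReal.tsum_mul_left, ENNReal.tsum_geometric, dyadicTailConst]
        ring

theorem exists_measurable_le_add_rpow_mul_lintegral_le {p : ℝ} (hp : 0 ≤ p) {K : X → ℝ≥0∞}
    {D : ℝ≥0∞} (hK : ∀ t : ℝ≥0, (t : ℝ≥0∞) ^ p * μ {x | (t : ℝ≥0∞) < K x} ≤ D) {M : ℝ≥0}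
    (hM : M ≠ 0) :
    ∃ G : X → ℝ≥0∞, Measurable G ∧ (∀ x, K x ≤ M + G x) ∧
      (M : ℝ≥0∞) ^ p * ∫⁻ x, G x ∂μ ≤ dyadicTailConst p * D * M := by
  obtain ⟨G, hG, hKG, hGint⟩ := exists_measurable_le_add_lintegral_eq_tsum μ K hM
  exact ⟨G, hG, hKG, hGint ▸ rpow_mul_tsum_dyadic_le μ hp hK M⟩

end DyadicMajorant

section Convolution

variable {X : Type*} [MeasurableSpace X] [AddCommGroup X] [MeasurableAdd₂ X] [MeasurableNeg X]
  {μ : Measure X} [μ.IsAddLeftInvariant]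

theorem aemeasurable_mul_enorm_sub [SFinite μ] {E : Type*} [NormedAddCommGroup E] {f : X → E}
    (hf : AEStronglyMeasurable f μ) {G : X → ℝ≥0∞} (hG : Measurable G) :
    AEMeasurable (fun q : X × X => G q.2 * ‖f (q.1 - q.2)‖ₑ) (μ.prod μ) :=
  (hG.comp measurable_snd).aemeasurable.mul
    (hf.enorm.comp_quasiMeasurePreserving (quasiMeasurePreserving_sub μ μ))

theorem lintegral_lintegral_mul_enorm_sub [SFinite μ] {E : Type*} [NormedAddCommGroup E]
    {f : X → E} (hf : AEStronglyMeasurable f μ) {G : X → ℝ≥0∞} (hG : Measurable G) :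
    ∫⁻ x, ∫⁻ y, G y * ‖f (x - y)‖ₑ ∂μ ∂μ = (∫⁻ y, G y ∂μ) * eLpNorm f 1 μ := by
  rw [lintegral_lintegral_swap (aemeasurable_mul_enorm_sub hf hG)]
  calc ∫⁻ y, ∫⁻ x, G y * ‖f (x - y)‖ₑ ∂μ ∂μ = ∫⁻ y, G y * eLpNorm f 1 μ ∂μ :=
        lintegral_congr fun y => by
          have hfy : AEMeasurable (fun x => ‖f (x - y)‖ₑ) μ := hf.enorm.comp_quasiMeasurePreserving
            (measurePreserving_sub_right μ y).quasiMeasurePreserving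
          rw [lintegral_const_mul'' _ hfy, lintegral_sub_right_eq_self (fun z => ‖f z‖ₑ),
            eLpNorm_one_eq_lintegral_enorm]
    _ = (∫⁻ y, G y ∂μ) * eLpNorm f 1 μ := lintegral_mul_const _ hG

variable [μ.IsNegInvariant] {𝕜 : Type*} [NormedRing 𝕜] [NormedSpace ℝ 𝕜] {k f : X → 𝕜}

theorem enorm_convolution_le_add (hf : AEStronglyMeasurable f μ) {M : ℝ≥0∞} (hM : M ≠ ⊤)
    {G : X → ℝ≥0∞} (hkG : ∀ y, ‖k y‖ₑ ≤ M + G y) (x : X) :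
    ‖∫ y, k y * f (x - y) ∂μ‖ₑ ≤ M * eLpNorm f 1 μ + ∫⁻ y, G y * ‖f (x - y)‖ₑ ∂μ := by
  have hfx : AEMeasurable (fun y => ‖f (x - y)‖ₑ) μ :=
    hf.enorm.comp_quasiMeasurePreserving
      (Measure.measurePreserving_sub_left μ x).quasiMeasurePreserving
  calc ‖∫ y, k y * f (x - y) ∂μ‖ₑ
      ≤ ∫⁻ y, ‖k y * f (x - y)‖ₑ ∂μ := enorm_integral_le_lintegral_enorm _
    _ ≤ ∫⁻ y, M * ‖f (x - y)‖ₑ + G y * ‖f (x - y)‖ₑ ∂μ := lintegral_mono fun y => by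
        have hmul : ‖k y * f (x - y)‖ₑ ≤ ‖k y‖ₑ * ‖f (x - y)‖ₑ := by
          simpa [enorm_eq_nnnorm] using ENNReal.coe_le_coe.2 (nnnorm_mul_le (k y) (f (x - y)))
        rw [← add_mul]
        exact hmul.trans (mul_le_mul_left (hkG y) _)
    _ = M * eLpNorm f 1 μ + ∫⁻ y, G y * ‖f (x - y)‖ₑ ∂μ := by
        rw [lintegral_add_left' (hfx.const_mul M), lintegral_const_mul' _ _ hM,
          lintegral_sub_left_eq_self (fun z => ‖f z‖ₑ), eLpNorm_one_eq_lintegral_enorm]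

theorem measure_lt_enorm_convolution_le [SFinite μ] (hf : Integrable f μ)
    (hf0 : eLpNorm f 1 μ ≠ 0) {M : ℝ≥0} (hM : M ≠ 0) {G : X → ℝ≥0∞} (hG : Measurable G)
    (hkG : ∀ y, ‖k y‖ₑ ≤ M + G y) :
    μ {x | 2 * M * eLpNorm f 1 μ < ‖∫ y, k y * f (x - y) ∂μ‖ₑ} ≤ (∫⁻ y, G y ∂μ) / M := by
  set L := eLpNorm f 1 μ
  set H : X → ℝ≥0∞ := fun x => ∫⁻ y, G y * ‖f (x - y)‖ₑ ∂μ
  have hL : L ≠ ⊤ := (memLp_one_iff_integrable.2 hf).eLpNorm_ne_top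
  have hML0 : (M : ℝ≥0∞) * L ≠ 0 := mul_ne_zero (ENNReal.coe_ne_zero.2 hM) hf0
  have hMLtop : (M : ℝ≥0∞) * L ≠ ⊤ := ENNReal.mul_ne_top ENNReal.coe_ne_top hL
  -- Convolving with the bounded part of `k` contributes at most `M * L`, so only the tail remains.
  have hsub : {x | 2 * M * L < ‖∫ y, k y * f (x - y) ∂μ‖ₑ} ⊆ {x | M * L ≤ H x} := fun x hx => by
    by_contra hH
    have hlt : (M : ℝ≥0∞) * L + H x < 2 * M * L := by
      rw [mul_assoc, two_mul]
      exact ENNReal.add_lt_add_left hMLtop (not_le.1 hH)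
    exact (enorm_convolution_le_add hf.1 ENNReal.coe_ne_top hkG x).not_gt (hlt.trans hx)
  calc μ {x | 2 * M * L < ‖∫ y, k y * f (x - y) ∂μ‖ₑ}
      ≤ μ {x | M * L ≤ H x} := measure_mono hsub
    _ ≤ (∫⁻ x, H x ∂μ) / (M * L) :=
        meas_ge_le_lintegral_div (aemeasurable_mul_enorm_sub hf.1 hG).lintegral_prod_right'
          hML0 hMLtop
    _ = (∫⁻ y, G y ∂μ) / M := by
        rw [lintegral_lintegral_mul_enorm_sub hf.1 hG, ENNReal.mul_div_mul_right _ _ hf0 hL]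

theorem convolution_eq_zero_of_ae_eq_zero (hf : f =ᵐ[μ] 0) (x : X) :
    ∫ y, k y * f (x - y) ∂μ = 0 := by
  have hfx : (fun y => f (x - y)) =ᵐ[μ] 0 :=
    (Measure.measurePreserving_sub_left μ x).quasiMeasurePreserving.ae_eq_comp hf
  refine integral_eq_zero_of_ae ?_
  filter_upwards [hfx] with y hy
  simp [hy]

theorem rpow_mul_measure_lt_enorm_convolution_le [SFinite μ] {p : ℝ} (hp : 0 < p)
    (hf : Integrable f μ) (hf0 : eLpNorm f 1 μ ≠ 0) {M : ℝ≥0} (hM : M ≠ 0) :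
    (M : ℝ≥0∞) ^ p * μ {x | 2 * M * eLpNorm f 1 μ < ‖∫ y, k y * f (x - y) ∂μ‖ₑ} ≤
      dyadicTailConst p * wnorm μ p k ^ p := by
  obtain ⟨G, hG, hkG, hGint⟩ := exists_measurable_le_add_rpow_mul_lintegral_le μ hp.le
    ((wnorm_le_iff (g := k) hp).1 le_rfl) hM
  calc (M : ℝ≥0∞) ^ p * μ {x | 2 * M * eLpNorm f 1 μ < ‖∫ y, k y * f (x - y) ∂μ‖ₑ}
      ≤ (M : ℝ≥0∞) ^ p * ((∫⁻ y, G y ∂μ) / M) := by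
        gcongr
        exact measure_lt_enorm_convolution_le hf hf0 hM hG hkG
    _ ≤ dyadicTailConst p * wnorm μ p k ^ p * M / M := by
        rw [← mul_div_assoc]
        gcongr
    _ = dyadicTailConst p * wnorm μ p k ^ p :=
        ENNReal.mul_div_cancel_right (ENNReal.coe_ne_zero.2 hM) ENNReal.coe_ne_top

theorem wnorm_convolution_le [SFinite μ] {p : ℝ} (hp : 0 < p) (hf : Integrable f μ) :
    wnorm μ p (fun x => ∫ y, k y * f (x - y) ∂μ) ≤
      2 * dyadicTailConst p ^ p⁻¹ * wnorm μ p k * eLpNorm f 1 μ := by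
  rw [wnorm_le_iff hp]
  intro t
  by_cases hf0 : eLpNorm f 1 μ = 0
  · simp [convolution_eq_zero_of_ae_eq_zero ((eLpNorm_eq_zero_iff hf.1 one_ne_zero).1 hf0)]
  rcases eq_or_ne t 0 with rfl | ht
  · simp [ENNReal.zero_rpow_of_pos hp]
  obtain ⟨L, hL⟩ : ∃ L : ℝ≥0, (L : ℝ≥0∞) = eLpNorm f 1 μ :=
    ⟨_, ENNReal.coe_toNNReal (memLp_one_iff_integrable.2 hf).eLpNorm_ne_top⟩
  have hL0 : L ≠ 0 := by rintro rfl; exact hf0 (by simp [← hL])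
  set M := t / (2 * L)
  have htM : (t : ℝ≥0∞) = 2 * M * L := by
    have : t = 2 * M * L := by simp only [M]; field_simp
    exact_mod_cast this
  calc (t : ℝ≥0∞) ^ p * μ {x | (t : ℝ≥0∞) < ‖∫ y, k y * f (x - y) ∂μ‖ₑ}
      = (2 * eLpNorm f 1 μ) ^ p *
          ((M : ℝ≥0∞) ^ p * μ {x | 2 * M * eLpNorm f 1 μ < ‖∫ y, k y * f (x - y) ∂μ‖ₑ}) := by
        rw [htM, hL, ENNReal.mul_rpow_of_nonneg _ _ hp.le, ENNReal.mul_rpow_of_nonneg _ _ hp.le,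
          ENNReal.mul_rpow_of_nonneg _ _ hp.le]
        ring
    _ ≤ (2 * eLpNorm f 1 μ) ^ p * (dyadicTailConst p * wnorm μ p k ^ p) := by
        gcongr (2 * eLpNorm f 1 μ) ^ p * ?_
        exact rpow_mul_measure_lt_enorm_convolution_le hp hf hf0
          (div_ne_zero ht (mul_ne_zero two_ne_zero hL0))
    _ = (2 * dyadicTailConst p ^ p⁻¹ * wnorm μ p k * eLpNorm f 1 μ) ^ p := by
        simp only [ENNReal.mul_rpow_of_nonneg _ _ hp.le, ENNReal.rpow_inv_rpow hp.ne']
        ring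

end Convolution

/-- Weak Young inequality on ℝⁿ: if `k ∈ L^{p,∞}(ℝⁿ)`, `1 < p < ∞`, and `f ∈ L¹(ℝⁿ)`,
then `‖k * f‖_{L^{p,∞}} ≤ C ‖k‖_{L^{p,∞}} ‖f‖_{L¹}` with `C` depending only on `p`. -/
theorem weak_young_Rn (p : ℝ) (hp : 1 < p) :
    ∃ C : ℝ≥0∞, C ≠ ⊤ ∧ ∀ (n : ℕ) (k f : (Fin n → ℝ) → ℂ),
      wnorm volume p k ≠ ⊤ → Integrable f volume →
      wnorm volume p (fun x => ∫ y, k y * f (x - y)) ≤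
        C * wnorm volume p k * eLpNorm f 1 volume :=
  ⟨2 * dyadicTailConst p ^ p⁻¹, ENNReal.mul_ne_top ENNReal.ofNat_ne_top
      (ENNReal.rpow_ne_top_of_nonneg (inv_nonneg.2 (by linarith)) (dyadicTailConst_ne_top hp)),
    fun _ _ _ _ hf => wnorm_convolution_le (by linarith) hf⟩
end

section
/- Let $1 < p < \infty$ and let $k : \mathbb{Z}^n \to \mathbb{C}$. The discrete convolution operator $(tf)(s) = \sum_{n' \in \mathbb{Z}^n} k(s - n') f(n')$ is bounded from $\ell^1(\mathbb{Z}^n)$ to $\ell^{p,\infty}(\mathbb{Z}^n)$ if and only if $k \in \ell^{p,\infty}(\mathbb{Z}^n)$. -/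
/-!
Testing the operator on the unit mass at `0` gives back `k`, so boundedness forces `k` into weak
`ℓ^p`. Conversely, for `p > 1` the weak `ℓ^p` quasinorm is equivalent to a norm: if
`‖k‖_{p,∞} ≤ M`, then the `j`-th largest value of `|k|` on a finite set `E` of size `N` is at most
`M j^{-1/p}`, whence `∑_E |k| ≤ M ∑_{j ≤ N} j^{-1/p} ≤ p' M N^{1-1/p}` with `p' = (1 - 1/p)⁻¹`
(concavity of `x ↦ x^{1-1/p}`).
As this bound is translation invariant, every finite `E` on which `|k * f| > α` satisfies
`α |E| ≤ ∑_E |k * f| ≤ p' M ‖f‖₁ |E|^{1-1/p}`, i.e. `α |E|^{1/p} ≤ p' M ‖f‖₁`.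
-/

open MeasureTheory
open scoped NNReal ENNReal

open Finset

theorem Real.sub_one_rpow_add_mul_rpow_sub_one_le {q y : ℝ} (hq₀ : 0 ≤ q) (hq₁ : q ≤ 1)
    (hy : 1 ≤ y) : (y - 1) ^ q + q * y ^ (q - 1) ≤ y ^ q := by
  have hy₀ : 0 < y := by linarith
  have hs : -1 ≤ -y⁻¹ := by linarith [inv_le_one_of_one_le₀ hy]
  calc (y - 1) ^ q + q * y ^ (q - 1) = y ^ q * (1 + -y⁻¹) ^ q + q * (y ^ q / y) := by
        rw [Real.rpow_sub_one hy₀.ne', ← Real.mul_rpow hy₀.le (by linarith)]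
        congr 2
        field_simp
        ring
    _ ≤ y ^ q * (1 + q * -y⁻¹) + q * (y ^ q / y) := by
        gcongr
        exact rpow_one_add_le_one_add_mul_self hs hq₀ hq₁
    _ = y ^ q := by ring

section FinsetSum

variable {ι : Type*} {p M : ℝ} {a : ι → ℝ}

theorem le_div_card_rpow_of_forall_le
    (h : ∀ t : ℝ, 0 < t → ∀ F : Finset ι, (∀ s ∈ F, t < a s) → t * (#F : ℝ) ^ (1 / p) ≤ M)
    (hM : 0 ≤ M) {E : Finset ι} {s₀ : ι} (hs₀ : s₀ ∈ E) (hmin : ∀ s ∈ E, a s₀ ≤ a s) :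
    a s₀ ≤ M / (#E : ℝ) ^ (1 / p) := by
  have hE : 0 < (#E : ℝ) ^ (1 / p) := Real.rpow_pos_of_pos (by simpa using ⟨s₀, hs₀⟩) _
  refine le_of_forall_lt_imp_le_of_dense fun t ht => ?_
  rcases le_or_gt t 0 with ht₀ | ht₀
  · exact ht₀.trans (by positivity)
  · rw [le_div_iff₀ hE]
    exact h t ht₀ E fun s hs => ht.trans_le (hmin s hs)

theorem sum_le_of_mul_card_rpow_le (hp : 1 < p)
    (h : ∀ t : ℝ, 0 < t → ∀ F : Finset ι, (∀ s ∈ F, t < a s) → t * (#F : ℝ) ^ (1 / p) ≤ M)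
    (E : Finset ι) :
    ∑ s ∈ E, a s ≤ (1 - 1 / p)⁻¹ * M * (#E : ℝ) ^ (1 - 1 / p) := by
  classical
  have hp₀ : 0 < p := by linarith
  have hM : 0 ≤ M := by
    simpa [Real.zero_rpow (inv_pos.2 hp₀).ne'] using h 1 one_pos ∅
  set q := 1 - 1 / p with hq
  have hq₀ : 0 < q := by rw [hq, sub_pos, div_lt_one hp₀]; exact hp
  have hq₁ : q ≤ 1 := by rw [hq]; linarith [one_div_pos.2 hp₀]
  induction hn : #E generalizing E with
  | zero => simp [card_eq_zero.1 hn, Real.zero_rpow hq₀.ne']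
  | succ n ih =>
    obtain ⟨s₀, hs₀, hmin⟩ := E.exists_min_image a (card_pos.1 (by omega))
    have hn₁ : (0 : ℝ) < n + 1 := by positivity
    have hs₀_le : a s₀ ≤ M * ((n : ℝ) + 1) ^ (q - 1) := by
      have := le_div_card_rpow_of_forall_le h hM hs₀ hmin
      rwa [hn, Nat.cast_succ, div_eq_mul_inv, ← Real.rpow_neg hn₁.le,
        show -(1 / p) = q - 1 by rw [hq]; ring] at this
    have hrest := ih (E.erase s₀) (by rw [card_erase_of_mem hs₀, hn]; rfl)
    have hconc := Real.sub_one_rpow_add_mul_rpow_sub_one_le hq₀.le hq₁ (y := n + 1) (by simp)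
    rw [add_sub_cancel_right] at hconc
    calc ∑ s ∈ E, a s = a s₀ + ∑ s ∈ E.erase s₀, a s := (add_sum_erase E a hs₀).symm
      _ ≤ M * ((n : ℝ) + 1) ^ (q - 1) + q⁻¹ * M * n ^ q := add_le_add hs₀_le hrest
      _ = q⁻¹ * M * (n ^ q + q * ((n : ℝ) + 1) ^ (q - 1)) := by field_simp; ring
      _ ≤ q⁻¹ * M * ((n + 1 : ℕ) : ℝ) ^ q := by push_cast; gcongr

end FinsetSum

theorem ENNReal.mul_natCast_rpow_le_of_mul_le {p : ℝ} (hp : 0 < p) {x K : ℝ≥0∞} {n : ℕ}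
    (h : x * n ≤ K * (n : ℝ≥0∞) ^ (1 - 1 / p)) : x * (n : ℝ≥0∞) ^ (1 / p) ≤ K := by
  rcases Nat.eq_zero_or_pos n with rfl | hn
  · simp [ENNReal.zero_rpow_of_pos (inv_pos.2 hp)]
  have hn₀ : (n : ℝ≥0∞) ≠ 0 := by exact_mod_cast hn.ne'
  have hq₀ : (n : ℝ≥0∞) ^ (1 - 1 / p) ≠ 0 := by simp [hn₀]
  have hq_top : (n : ℝ≥0∞) ^ (1 - 1 / p) ≠ ⊤ := by simp [hn₀]
  rw [← ENNReal.mul_le_mul_iff_left hq₀ hq_top, mul_assoc, ← ENNReal.rpow_add _ _ hn₀ (by simp)]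
  simpa using h

section WeakNorm

variable {X E : Type*} [MeasurableSpace X] {p : ℝ}

theorem mul_card_rpow_le_toReal_wnorm [Norm E] [MeasurableSingletonClass X] {g : X → E}
    (hp : 0 ≤ p) (hg : wnorm Measure.count p g ≠ ⊤) {t : ℝ} (ht : 0 ≤ t) {F : Finset X}
    (hF : ∀ s ∈ F, t < ‖g s‖) :
    t * (#F : ℝ) ^ (1 / p) ≤ (wnorm Measure.count p g).toReal := by
  have hp' : 0 ≤ 1 / p := by positivity
  rw [← ENNReal.ofReal_le_iff_le_toReal hg, ENNReal.ofReal_mul ht,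
    ← ENNReal.ofReal_rpow_of_nonneg (Nat.cast_nonneg _) hp', ENNReal.ofReal_natCast]
  refine le_iSup_of_le t.toNNReal ?_
  rw [Real.coe_toNNReal t ht, ← Measure.count_apply_finset]
  gcongr
  · exact le_rfl
  · exact hF

theorem wnorm_count_le_of_forall_finset [Norm E] [DiscreteMeasurableSpace X] {g : X → E}
    {K : ℝ≥0∞}
    (h : ∀ α : ℝ≥0, 0 < α → ∀ F : Finset X, (∀ s ∈ F, (α : ℝ) < ‖g s‖) →
      (α : ℝ≥0∞) * (#F : ℝ≥0∞) ^ (1 / p) ≤ K) :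
    wnorm Measure.count p g ≤ K := by
  refine iSup_le fun α => ?_
  rcases eq_zero_or_pos α with rfl | hα
  · simp
  set S := {x | (α : ℝ) < ‖g x‖}
  rw [Measure.count_apply (.of_discrete)]
  rcases S.finite_or_infinite with hS | hS
  · rw [hS.encard_eq_coe_toFinset_card]
    exact h α hα _ fun s hs => hS.mem_toFinset.1 hs
  · have hlim : Filter.Tendsto (fun n : ℕ => (α : ℝ≥0∞) * (n : ℝ≥0∞) ^ (1 / p)) Filter.atTop
        (nhds ((α : ℝ≥0∞) * ⊤ ^ (1 / p))) :=
      ENNReal.Tendsto.const_mul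
        ((ENNReal.continuous_rpow_const.tendsto ⊤).comp ENNReal.tendsto_nat_nhds_top)
        (Or.inr ENNReal.coe_ne_top)
    rw [hS.encard_eq]
    refine le_of_tendsto' hlim fun n => ?_
    obtain ⟨F, hFS, rfl⟩ := hS.exists_subset_card_eq n
    exact h α hα F fun s hs => hFS hs

theorem sum_enorm_le_of_wnorm_ne_top [NormedAddCommGroup E] [MeasurableSingletonClass X]
    {g : X → E} (hp : 1 < p) (hg : wnorm Measure.count p g ≠ ⊤) (F : Finset X) :
    ∑ s ∈ F, ‖g s‖ₑ ≤ ENNReal.ofReal ((1 - 1 / p)⁻¹ * (wnorm Measure.count p g).toReal) *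
      (#F : ℝ≥0∞) ^ (1 - 1 / p) := by
  have hq : 0 ≤ 1 - 1 / p := by rw [sub_nonneg, div_le_one (by linarith)]; exact hp.le
  have hsum := sum_le_of_mul_card_rpow_le hp (a := fun s => ‖g s‖)
    (fun t ht F hF => mul_card_rpow_le_toReal_wnorm (by linarith) hg ht.le hF) F
  calc ∑ s ∈ F, ‖g s‖ₑ = ENNReal.ofReal (∑ s ∈ F, ‖g s‖) := by
        rw [ENNReal.ofReal_sum_of_nonneg fun s _ => norm_nonneg _]
        simp only [ofReal_norm]
    _ ≤ ENNReal.ofReal ((1 - 1 / p)⁻¹ * (wnorm Measure.count p g).toReal *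
          (#F : ℝ) ^ (1 - 1 / p)) := ENNReal.ofReal_le_ofReal hsum
    _ = _ := by
        rw [ENNReal.ofReal_mul (by positivity), ← ENNReal.ofReal_natCast,
          ENNReal.ofReal_rpow_of_nonneg (Nat.cast_nonneg _) hq]

end WeakNorm

section Convolution

variable {G 𝕜 : Type*} [AddGroup G] [NormedRing 𝕜] {k f : G → 𝕜}

theorem sum_enorm_tsum_sub_mul_le {E : Finset G} {B : ℝ≥0∞}
    (hB : ∀ m, ∑ s ∈ E, ‖k (s - m)‖ₑ ≤ B) :
    ∑ s ∈ E, ‖∑' m, k (s - m) * f m‖ₑ ≤ B * ∑' m, ‖f m‖ₑ :=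
  calc ∑ s ∈ E, ‖∑' m, k (s - m) * f m‖ₑ ≤ ∑ s ∈ E, ∑' m, ‖k (s - m)‖ₑ * ‖f m‖ₑ :=
        sum_le_sum fun s _ => (enorm_tsum_le_tsum_enorm (f := fun m => k (s - m) * f m)).trans
          (ENNReal.tsum_le_tsum fun m => by
            simpa [enorm_eq_nnnorm] using ENNReal.coe_le_coe.2 (nnnorm_mul_le (k (s - m)) (f m)))
    _ = ∑' m, (∑ s ∈ E, ‖k (s - m)‖ₑ) * ‖f m‖ₑ := by
        rw [← Summable.tsum_finsetSum fun _ _ => ENNReal.summable]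
        simp only [sum_mul]
    _ ≤ ∑' m, B * ‖f m‖ₑ := ENNReal.tsum_le_tsum fun m => by gcongr; exact hB m
    _ = B * ∑' m, ‖f m‖ₑ := ENNReal.tsum_mul_left

theorem wnorm_tsum_sub_mul_le [MeasurableSpace G] [DiscreteMeasurableSpace G] {p : ℝ}
    (hp : 1 < p) (hk : wnorm Measure.count p k ≠ ⊤) :
    wnorm Measure.count p (fun s => ∑' m, k (s - m) * f m) ≤
      ENNReal.ofReal ((1 - 1 / p)⁻¹ * (wnorm Measure.count p k).toReal) * ∑' m, ‖f m‖ₑ := by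
  set C := ENNReal.ofReal ((1 - 1 / p)⁻¹ * (wnorm Measure.count p k).toReal)
  refine wnorm_count_le_of_forall_finset fun α _ F hF => ?_
  refine ENNReal.mul_natCast_rpow_le_of_mul_le (by linarith) ?_
  have htranslate : ∀ m, ∑ s ∈ F, ‖k (s - m)‖ₑ ≤ C * (#F : ℝ≥0∞) ^ (1 - 1 / p) := fun m => by
    simpa [C] using sum_enorm_le_of_wnorm_ne_top hp hk (F.map (Equiv.subRight m).toEmbedding)
  calc (α : ℝ≥0∞) * #F = ∑ _s ∈ F, (α : ℝ≥0∞) := by simp [mul_comm]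
    _ ≤ ∑ s ∈ F, ‖∑' m, k (s - m) * f m‖ₑ := sum_le_sum fun s hs => by
        rw [enorm_eq_nnnorm]
        exact_mod_cast (hF s hs).le
    _ ≤ C * (#F : ℝ≥0∞) ^ (1 - 1 / p) * ∑' m, ‖f m‖ₑ := sum_enorm_tsum_sub_mul_le htranslate
    _ = (C * ∑' m, ‖f m‖ₑ) * (#F : ℝ≥0∞) ^ (1 - 1 / p) := by ring

end Convolution

/-- Discrete Sobolev–Hardy–Littlewood–Stepanov theorem on ℤⁿ: the convolution operator
`(tf)(s) = ∑ k(s - n') f(n')` is bounded from `ℓ¹(ℤⁿ)` to `ℓ^{p,∞}(ℤⁿ)` if and only if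
`k ∈ ℓ^{p,∞}(ℤⁿ)`. -/
theorem sobolev_hardy_littlewood_stepanov_Zn (n : ℕ) (p : ℝ) (hp : 1 < p)
    (k : (Fin n → ℤ) → ℂ) :
    (∃ C : ℝ≥0, ∀ f : (Fin n → ℤ) → ℂ, Summable (fun m => ‖f m‖) →
        wnorm (Measure.count : Measure (Fin n → ℤ)) p (fun s => ∑' m, k (s - m) * f m)
          ≤ (C : ℝ≥0∞) * ∑' m, (‖f m‖₊ : ℝ≥0∞))
      ↔ wnorm (Measure.count : Measure (Fin n → ℤ)) p k ≠ ⊤ := by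
  constructor
  · rintro ⟨C, hC⟩
    set δ : (Fin n → ℤ) → ℂ := Pi.single 0 1
    have hδ : Summable fun m => ‖δ m‖ := by
      simpa [δ, Pi.single_apply, apply_ite] using (hasSum_ite_eq (0 : Fin n → ℤ) (1 : ℝ)).summable
    have hconv : (fun s => ∑' m, k (s - m) * δ m) = k := funext fun s => by
      simp [δ, Pi.single_apply]
    have hnorm : ∑' m, (‖δ m‖₊ : ℝ≥0∞) = 1 := by simp [δ, Pi.single_apply, apply_ite]
    have hk := hC δ hδ
    rw [hconv, hnorm, mul_one] at hk
    exact ne_top_of_le_ne_top ENNReal.coe_ne_top hk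
  · intro hk
    exact ⟨_, fun f _ => wnorm_tsum_sub_mul_le hp hk⟩
end

section
/- For a sequence $k \in \ell^{p,\infty}(\mathbb{Z}^n)$ with $1 < p < \infty$ and $f \in \ell^1(\mathbb{Z}^n)$, the convolution $k*f$ defined by $(k*f)(s) = \sum_{m} k(s-m) f(m)$ satisfies $\|k*f\|_{\ell^{p,\infty}} \leq C \|k\|_{\ell^{p,\infty}} \|f\|_{\ell^1}$ for a constant $C$ depending only on $p$. -/
open MeasureTheory
open scoped NNReal ENNReal

/-!
Split `k` at the height `b = α / (2‖f‖₁)`. The part of `k` below `b` contributes at most `α / 2`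
to `k * f` pointwise, so `{|k * f| > α}` lies in `{|k₁| * |f| > α / 2}`, where `k₁` is the part of
`k` above `b`; by Chebyshev this set has at most `(2 / α) ‖k₁‖₁ ‖f‖₁` points. Summing the weak-type
bound `#{|k| > t} ≤ ‖k‖ᵖ t⁻ᵖ` over the dyadic heights `t = 2ʲ b` gives `‖k₁‖₁ ≲ ‖k‖ᵖ b¹⁻ᵖ`, a
geometric series since `p > 1`, and substituting `b` yields `αᵖ #{|k * f| > α} ≲ (‖k‖ ‖f‖₁)ᵖ`.
-/

lemma NNReal.exists_two_pow_mul_lt_le {b w : ℝ≥0} (hb : 0 < b) (h : b < w) :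
    ∃ j : ℕ, 2 ^ j * b < w ∧ w ≤ 2 ^ (j + 1) * b := by
  classical
  have hex : ∃ j : ℕ, w ≤ 2 ^ (j + 1) * b := by
    obtain ⟨n, hn⟩ := pow_unbounded_of_one_lt (w / b) one_lt_two
    exact ⟨n, ((div_lt_iff₀ hb).1 hn).le.trans (by gcongr <;> simp)⟩
  refine ⟨Nat.find hex, ?_, Nat.find_spec hex⟩
  cases hj : Nat.find hex with
  | zero => simpa using h
  | succ i => exact not_le.1 (Nat.find_min hex (by omega : i < Nat.find hex))

lemma ENNReal.rpow_mul_le_of_mul_le_mul_rpow_one_sub {p : ℝ} {b N K : ℝ≥0∞} (hb0 : b ≠ 0)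
    (hbt : b ≠ ⊤) (h : b * N ≤ K * b ^ (1 - p)) : b ^ p * N ≤ K := by
  calc b ^ p * N = b ^ (p - 1 + 1) * N := by rw [sub_add_cancel]
    _ = b ^ (p - 1) * (b * N) := by rw [ENNReal.rpow_add _ _ hb0 hbt, ENNReal.rpow_one, mul_assoc]
    _ ≤ b ^ (p - 1) * (K * b ^ (1 - p)) := by gcongr
    _ = K := by
        rw [mul_left_comm, ← ENNReal.rpow_add _ _ hb0 hbt, sub_add_sub_cancel', sub_self,
          ENNReal.rpow_zero, mul_one]

section WeakNorm

variable {X E : Type*} [MeasurableSpace X] [Norm E] {μ : Measure X} {p : ℝ} {g : X → E}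

lemma rpow_mul_measure_lt_norm_le_wnorm_rpow (hp : 0 < p) (t : ℝ≥0) :
    (t : ℝ≥0∞) ^ p * μ {x | (t : ℝ) < ‖g x‖} ≤ wnorm μ p g ^ p := by
  have h := le_iSup (fun α : ℝ≥0 => (α : ℝ≥0∞) * μ {x | (α : ℝ) < ‖g x‖} ^ (1 / p)) t
  calc (t : ℝ≥0∞) ^ p * μ {x | (t : ℝ) < ‖g x‖}
      = ((t : ℝ≥0∞) * μ {x | (t : ℝ) < ‖g x‖} ^ (1 / p)) ^ p := by
        rw [ENNReal.mul_rpow_of_nonneg _ _ hp.le, one_div, ENNReal.rpow_inv_rpow hp.ne']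
    _ ≤ wnorm μ p g ^ p := ENNReal.rpow_le_rpow h hp.le

lemma wnorm_le_of_forall_rpow_mul_measure_le (hp : 0 < p) {M : ℝ≥0∞}
    (h : ∀ t : ℝ≥0, 0 < t → (t : ℝ≥0∞) ^ p * μ {x | (t : ℝ) < ‖g x‖} ≤ M ^ p) :
    wnorm μ p g ≤ M := by
  refine iSup_le fun t => ?_
  rcases eq_zero_or_pos t with rfl | ht
  · simp
  rw [one_div, ← ENNReal.rpow_rpow_inv hp.ne' (t : ℝ≥0∞),
    ← ENNReal.mul_rpow_of_nonneg _ _ (inv_nonneg.2 hp.le), ENNReal.rpow_inv_le_iff hp]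
  exact h t ht

end WeakNorm

section Tail

variable {X : Type*} [MeasurableSpace X] {μ : Measure X} {p : ℝ} {w : X → ℝ≥0} {M : ℝ≥0∞}

lemma coe_mul_measure_lt_le_rpow_one_sub_mul
    (hM : ∀ t : ℝ≥0, 0 < t → (t : ℝ≥0∞) ^ p * μ {x | t < w x} ≤ M) {s : ℝ≥0} (hs : 0 < s) :
    (s : ℝ≥0∞) * μ {x | s < w x} ≤ (s : ℝ≥0∞) ^ (1 - p) * M := by
  have hs0 : (s : ℝ≥0∞) ≠ 0 := by exact_mod_cast hs.ne'
  calc (s : ℝ≥0∞) * μ {x | s < w x}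
      = (s : ℝ≥0∞) ^ (1 - p) * ((s : ℝ≥0∞) ^ p * μ {x | s < w x}) := by
        rw [← mul_assoc, ← ENNReal.rpow_add _ _ hs0 ENNReal.coe_ne_top, sub_add_cancel,
          ENNReal.rpow_one]
    _ ≤ (s : ℝ≥0∞) ^ (1 - p) * M := by gcongr; exact hM s hs

lemma lintegral_indicator_lt_le (hw : Measurable w)
    (hM : ∀ t : ℝ≥0, 0 < t → (t : ℝ≥0∞) ^ p * μ {x | t < w x} ≤ M) {b : ℝ≥0} (hb : 0 < b) :
    ∫⁻ x, {x | b < w x}.indicator (fun x => (w x : ℝ≥0∞)) x ∂μ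
      ≤ 2 * (1 - 2 ^ (1 - p))⁻¹ * M * (b : ℝ≥0∞) ^ (1 - p) := by
  have hmeas : ∀ s : ℝ≥0, MeasurableSet {x | s < w x} :=
    fun _ => measurableSet_lt measurable_const hw
  -- On `{2ʲ b < w ≤ 2ʲ⁺¹ b}` the `j`-th term alone dominates `w`.
  have hpoint : ∀ x, {x | b < w x}.indicator (fun x => (w x : ℝ≥0∞)) x
      ≤ ∑' j : ℕ, {x | 2 ^ j * b < w x}.indicator
          (fun _ => ((2 ^ (j + 1) * b : ℝ≥0) : ℝ≥0∞)) x := by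
    intro x
    by_cases hx : b < w x
    · obtain ⟨j, hlt, hle⟩ := NNReal.exists_two_pow_mul_lt_le hb hx
      refine le_trans ?_ (ENNReal.le_tsum j)
      rw [Set.indicator_of_mem (show x ∈ {x | b < w x} from hx),
        Set.indicator_of_mem (show x ∈ {x | 2 ^ j * b < w x} from hlt)]
      exact_mod_cast hle
    · simp [hx]
  have hshell : ∀ j : ℕ, ((2 ^ (j + 1) * b : ℝ≥0) : ℝ≥0∞) * μ {x | 2 ^ j * b < w x}
      ≤ 2 * M * (b : ℝ≥0∞) ^ (1 - p) * (2 ^ (1 - p)) ^ j := by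
    intro j
    have h := coe_mul_measure_lt_le_rpow_one_sub_mul hM (s := 2 ^ j * b) (by positivity)
    calc ((2 ^ (j + 1) * b : ℝ≥0) : ℝ≥0∞) * μ {x | 2 ^ j * b < w x}
        = 2 * (((2 ^ j * b : ℝ≥0) : ℝ≥0∞) * μ {x | 2 ^ j * b < w x}) := by push_cast; ring
      _ ≤ 2 * (((2 ^ j * b : ℝ≥0) : ℝ≥0∞) ^ (1 - p) * M) := by gcongr
      _ = 2 * M * (b : ℝ≥0∞) ^ (1 - p) * (2 ^ (1 - p)) ^ j := by
        rw [ENNReal.coe_mul, ENNReal.coe_pow, ENNReal.mul_rpow_of_ne_top (by simp) (by simp),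
          ← ENNReal.rpow_natCast_mul, mul_comm (j : ℝ), ENNReal.rpow_mul_natCast]
        push_cast
        ring
  calc ∫⁻ x, {x | b < w x}.indicator (fun x => (w x : ℝ≥0∞)) x ∂μ
      ≤ ∫⁻ x, ∑' j : ℕ, {x | 2 ^ j * b < w x}.indicator
          (fun _ => ((2 ^ (j + 1) * b : ℝ≥0) : ℝ≥0∞)) x ∂μ := lintegral_mono hpoint
    _ = ∑' j : ℕ, ((2 ^ (j + 1) * b : ℝ≥0) : ℝ≥0∞) * μ {x | 2 ^ j * b < w x} := by
        rw [lintegral_tsum fun j => (aemeasurable_const.indicator (hmeas _))]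
        simp_rw [lintegral_indicator_const (hmeas _)]
    _ ≤ ∑' j : ℕ, 2 * M * (b : ℝ≥0∞) ^ (1 - p) * (2 ^ (1 - p)) ^ j := ENNReal.tsum_le_tsum hshell
    _ = 2 * (1 - 2 ^ (1 - p))⁻¹ * M * (b : ℝ≥0∞) ^ (1 - p) := by
        rw [ENNReal.tsum_mul_left, ENNReal.tsum_geometric]
        ring

end Tail

section Convolution

variable {G R : Type*} [AddCommGroup G]

lemma ENNReal.tsum_tsum_sub_mul (g h : G → ℝ≥0∞) :
    ∑' s, ∑' m, g (s - m) * h m = (∑' x, g x) * ∑' m, h m := by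
  rw [ENNReal.tsum_comm, ← ENNReal.tsum_mul_left]
  congr 1
  funext m
  rw [ENNReal.tsum_mul_right]
  exact congrArg (· * h m) ((Equiv.subRight m).tsum_eq g)

variable [NormedRing R]

lemma lt_tsum_indicator_mul_of_lt_nnnorm_conv {k f : G → R} {s : G} {a : ℝ≥0∞} {b : ℝ≥0}
    (hb : b * ∑' m, (‖f m‖₊ : ℝ≥0∞) ≤ a) (hs : 2 * a < ‖∑' m, k (s - m) * f m‖₊) :
    a < ∑' m, {x | b < ‖k x‖₊}.indicator (fun x => (‖k x‖₊ : ℝ≥0∞)) (s - m) * ‖f m‖₊ := by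
  set big := {x | b < ‖k x‖₊}
  by_contra! hlarge
  have hsmall : ∑' m, bigᶜ.indicator (fun x => (‖k x‖₊ : ℝ≥0∞)) (s - m) * ‖f m‖₊ ≤ a := by
    refine le_trans (ENNReal.tsum_le_tsum fun m => ?_) (ENNReal.tsum_mul_left.le.trans hb)
    gcongr
    exact Set.indicator_apply_le' (fun hx => by simpa [big] using hx) fun _ => zero_le
  have hconv : (‖∑' m, k (s - m) * f m‖₊ : ℝ≥0∞) ≤ ∑' m, (‖k (s - m)‖₊ : ℝ≥0∞) * ‖f m‖₊ :=
    tsum_of_enorm_bounded (f := fun m => k (s - m) * f m) ENNReal.summable.hasSum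
      fun m => by exact_mod_cast nnnorm_mul_le (k (s - m)) (f m)
  have hsplit : ∑' m, (‖k (s - m)‖₊ : ℝ≥0∞) * ‖f m‖₊
      = ∑' m, big.indicator (fun x => (‖k x‖₊ : ℝ≥0∞)) (s - m) * ‖f m‖₊
        + ∑' m, bigᶜ.indicator (fun x => (‖k x‖₊ : ℝ≥0∞)) (s - m) * ‖f m‖₊ := by
    rw [← ENNReal.tsum_add]
    simp_rw [← add_mul, Set.indicator_self_add_compl_apply]
  refine hs.not_ge (hconv.trans ?_)
  rw [hsplit, two_mul]
  exact add_le_add hlarge hsmall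

variable [Countable G] [MeasurableSpace G] [MeasurableSingletonClass G]

lemma mul_count_lt_nnnorm_conv_le (k f : G → R) {p : ℝ} (hp : 0 < p) {b : ℝ≥0} (hb : 0 < b) :
    (b * ∑' m, (‖f m‖₊ : ℝ≥0∞)) * Measure.count
        {s | 2 * (b * ∑' m, (‖f m‖₊ : ℝ≥0∞)) < ‖∑' m, k (s - m) * f m‖₊}
      ≤ 2 * (1 - 2 ^ (1 - p))⁻¹ * wnorm Measure.count p k ^ p * (b : ℝ≥0∞) ^ (1 - p)
        * ∑' m, (‖f m‖₊ : ℝ≥0∞) := by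
  set a := (b : ℝ≥0∞) * ∑' m, (‖f m‖₊ : ℝ≥0∞)
  set tail := {x | b < ‖k x‖₊}.indicator (fun x => (‖k x‖₊ : ℝ≥0∞))
  have hdist : ∀ t : ℝ≥0, 0 < t →
      (t : ℝ≥0∞) ^ p * Measure.count {x | t < ‖k x‖₊} ≤ wnorm Measure.count p k ^ p := by
    intro t _
    convert rpow_mul_measure_lt_norm_le_wnorm_rpow (μ := Measure.count) (g := k) hp t using 4
    simp [← NNReal.coe_lt_coe]
  calc a * Measure.count {s | 2 * a < ‖∑' m, k (s - m) * f m‖₊}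
      ≤ a * Measure.count {s | a < ∑' m, tail (s - m) * ‖f m‖₊} := by
        refine mul_le_mul' le_rfl (measure_mono fun s hs => ?_)
        exact lt_tsum_indicator_mul_of_lt_nnnorm_conv le_rfl hs
    _ ≤ a * Measure.count {s | a ≤ ∑' m, tail (s - m) * ‖f m‖₊} :=
        mul_le_mul' le_rfl (measure_mono (Set.ofPred_subset_ofPred.2 fun _ => le_of_lt))
    _ ≤ ∫⁻ s, ∑' m, tail (s - m) * ‖f m‖₊ ∂Measure.count :=
        mul_meas_ge_le_lintegral₀ (measurable_of_countable _).aemeasurable a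
    _ = ∑' s, ∑' m, tail (s - m) * ‖f m‖₊ := lintegral_count _
    _ = (∑' x, tail x) * ∑' m, (‖f m‖₊ : ℝ≥0∞) := ENNReal.tsum_tsum_sub_mul _ _
    _ ≤ _ := by
        gcongr
        rw [← lintegral_count]
        exact lintegral_indicator_lt_le (measurable_of_countable _) hdist hb

end Convolution

noncomputable def weakYoungConst (p : ℝ) : ℝ≥0∞ := 2 * (2 * (1 - 2 ^ (1 - p))⁻¹) ^ p⁻¹

lemma weakYoungConst_ne_top {p : ℝ} (hp : 1 < p) : weakYoungConst p ≠ ⊤ := by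
  have hlt : (2 : ℝ≥0∞) ^ (1 - p) < 1 :=
    ENNReal.rpow_lt_one_of_one_lt_of_neg (by norm_num) (by linarith)
  have hinv : (1 - (2 : ℝ≥0∞) ^ (1 - p))⁻¹ ≠ ⊤ := ENNReal.inv_ne_top.2 (tsub_pos_iff_lt.2 hlt).ne'
  exact ENNReal.mul_ne_top (by simp) <|
    ENNReal.rpow_ne_top_of_nonneg (inv_nonneg.2 (by linarith)) (ENNReal.mul_ne_top (by simp) hinv)

theorem wnorm_count_conv_le {G R : Type*} [AddCommGroup G] [NormedRing R] [Countable G]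
    [MeasurableSpace G] [MeasurableSingletonClass G] {p : ℝ} (hp : 1 < p) (k f : G → R)
    (hf : ∑' m, (‖f m‖₊ : ℝ≥0∞) ≠ ⊤) :
    wnorm Measure.count p (fun s => ∑' m, k (s - m) * f m)
      ≤ weakYoungConst p * wnorm Measure.count p k * ∑' m, (‖f m‖₊ : ℝ≥0∞) := by
  have hp0 : 0 < p := one_pos.trans hp
  refine wnorm_le_of_forall_rpow_mul_measure_le hp0 fun t ht => ?_
  lift ∑' m, (‖f m‖₊ : ℝ≥0∞) to ℝ≥0 using hf with F hF
  rcases eq_zero_or_pos F with rfl | hF0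
  · have hf0 : ∀ m, f m = 0 := fun m => by simpa using ENNReal.tsum_eq_zero.1 hF.symm m
    simp [hf0]
  set b : ℝ≥0 := t / (2 * F)
  have hb : 0 < b := by positivity
  have htb : t = 2 * (b * F) := by simp only [b]; field_simp
  have hset : {s | (t : ℝ) < ‖∑' m, k (s - m) * f m‖}
      = {s | 2 * ((b : ℝ≥0∞) * F) < ‖∑' m, k (s - m) * f m‖₊} := by
    ext s
    rw [Set.mem_ofPred_eq, Set.mem_ofPred_eq, ← coe_nnnorm, NNReal.coe_lt_coe, ← ENNReal.coe_lt_coe,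
      htb]
    push_cast
    rfl
  have hlevel := mul_count_lt_nnnorm_conv_le k f hp0 hb
  rw [← hF, ← hset] at hlevel
  have hcount : (b : ℝ≥0∞) ^ p * Measure.count {s | (t : ℝ) < ‖∑' m, k (s - m) * f m‖}
      ≤ 2 * (1 - 2 ^ (1 - p))⁻¹ * wnorm Measure.count p k ^ p := by
    refine ENNReal.rpow_mul_le_of_mul_le_mul_rpow_one_sub (by positivity) ENNReal.coe_ne_top ?_
    rwa [mul_right_comm, ENNReal.mul_le_mul_iff_left (by positivity) ENNReal.coe_ne_top] at hlevel
  calc (t : ℝ≥0∞) ^ p * Measure.count {s | (t : ℝ) < ‖∑' m, k (s - m) * f m‖}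
      = (2 * F : ℝ≥0∞) ^ p
          * ((b : ℝ≥0∞) ^ p * Measure.count {s | (t : ℝ) < ‖∑' m, k (s - m) * f m‖}) := by
        rw [htb, show ((2 * (b * F) : ℝ≥0) : ℝ≥0∞) = 2 * F * b by push_cast; ring,
          ENNReal.mul_rpow_of_nonneg _ _ hp0.le, mul_assoc]
    _ ≤ (2 * F : ℝ≥0∞) ^ p * (2 * (1 - 2 ^ (1 - p))⁻¹ * wnorm Measure.count p k ^ p) := by
        gcongr
    _ = (weakYoungConst p * wnorm Measure.count p k * F) ^ p := by
        simp only [weakYoungConst, ENNReal.mul_rpow_of_nonneg _ _ hp0.le,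
          ENNReal.rpow_inv_rpow hp0.ne']
        ring

/-- Weak Young inequality on ℤⁿ: for `k ∈ ℓ^{p,∞}(ℤⁿ)` and `f ∈ ℓ¹(ℤⁿ)`,
`‖k * f‖_{ℓ^{p,∞}} ≤ C ‖k‖_{ℓ^{p,∞}} ‖f‖_{ℓ¹}` with `C` depending only on `p`. -/
theorem weak_young_Zn (p : ℝ) (hp : 1 < p) :
    ∃ C : ℝ≥0∞, C ≠ ⊤ ∧ ∀ (n : ℕ) (k f : (Fin n → ℤ) → ℂ),
      wnorm (Measure.count : Measure (Fin n → ℤ)) p k ≠ ⊤ → Summable (fun m => ‖f m‖) →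
      wnorm (Measure.count : Measure (Fin n → ℤ)) p (fun s => ∑' m, k (s - m) * f m)
        ≤ C * wnorm (Measure.count : Measure (Fin n → ℤ)) p k * ∑' m, (‖f m‖₊ : ℝ≥0∞) := by
  refine ⟨weakYoungConst p, weakYoungConst_ne_top hp, fun n k f _ hf => ?_⟩
  exact wnorm_count_conv_le hp k f
    (ENNReal.tsum_coe_ne_top_iff_summable.2 (NNReal.summable_coe.1 (by simpa using hf)))
end
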